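/- For |q|<1, the sum over n≥1 of q^{2n²-n}/(-q;q)_{2n} equals the negative of the sum over n≥1 of (-1)^n q^{n(n+1)/2}/(-q;q)_n. -/
import Mathlib


open scoped BigOperators

/-- The finite q-Pochhammer symbol `(a;q)_n = ∏_{j=0}^{n-1} (1 - a q^j)`. -/
noncomputable def qPoch (a q : ℂ) (n : ℕ) : ℂ := ∏ j ∈ Finset.range n, (1 - a * q ^ j)

lemma qPoch_succ (a q : ℂ) (n : ℕ) :
    qPoch a q (n + 1) = qPoch a q n * (1 - a * q ^ n) := by
  simp [qPoch, Finset.prod_range_succ]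

lemma factor_ne_zero {q : ℂ} (hq : ‖q‖ < 1) (j : ℕ) : 1 - (-q) * q ^ j ≠ 0 := by
  intro h
  have h1 : (-q) * q ^ j = 1 := by
    have := sub_eq_zero.mp h
    linear_combination -this
  have : ‖(-q) * q ^ j‖ < 1 := by
    rw [norm_mul, norm_neg, norm_pow]
    calc ‖q‖ * ‖q‖ ^ j ≤ ‖q‖ * 1 :=
          mul_le_mul_of_nonneg_left (pow_le_one₀ (norm_nonneg q) hq.le) (norm_nonneg q)
      _ = ‖q‖ := mul_one _
      _ < 1 := hq
  rw [h1] at this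
  simp at this

lemma qPoch_ne_zero {q : ℂ} (hq : ‖q‖ < 1) (n : ℕ) : qPoch (-q) q n ≠ 0 := by
  unfold qPoch
  exact Finset.prod_ne_zero_iff.mpr fun j _ => factor_ne_zero hq j

/-- The RHS summand. -/
noncomputable def Aterm (q : ℂ) (n : ℕ) : ℂ :=
  (-1 : ℂ) ^ (n + 1) * q ^ ((n + 1) * (n + 2) / 2) / qPoch (-q) q (n + 1)

lemma Aterm_succ {q : ℂ} (hq : ‖q‖ < 1) (n : ℕ) :
    Aterm q (n + 1) = Aterm q n * (-(q ^ (n + 2)) / (1 - (-q) * q ^ (n + 1))) := by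
  have he : (n + 2) * (n + 3) / 2 = (n + 1) * (n + 2) / 2 + (n + 2) := by
    have h1 : (n + 2) * (n + 3) = (n + 1) * (n + 2) + (n + 2) * 2 := by ring
    rw [h1, Nat.add_mul_div_right _ _ (by norm_num : 0 < 2)]
  have hP : qPoch (-q) q (n + 2) = qPoch (-q) q (n + 1) * (1 - (-q) * q ^ (n + 1)) :=
    qPoch_succ _ _ _
  have h1 : qPoch (-q) q (n + 1) ≠ 0 := qPoch_ne_zero hq _
  have h2 : 1 - (-q) * q ^ (n + 1) ≠ 0 := factor_ne_zero hq _
  unfold Aterm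
  rw [show n + 1 + 1 = n + 2 from rfl, show n + 1 + 2 = n + 3 from rfl, he, hP, pow_add,
    pow_succ]
  field_simp
  ring

lemma summable_Aterm {q : ℂ} (hq : ‖q‖ < 1) : Summable (Aterm q) := by
  apply summable_of_ratio_norm_eventually_le (r := (1 : ℝ) / 2) (by norm_num)
  have h0 : Filter.Tendsto (fun n : ℕ => ‖q‖ ^ n) Filter.atTop (nhds 0) :=
    tendsto_pow_atTop_nhds_zero_of_lt_one (norm_nonneg q) hq
  have hev : ∀ᶠ n : ℕ in Filter.atTop, ‖q‖ ^ n ≤ 1 / 3 := by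
    have := h0.eventually (eventually_le_nhds (by norm_num : (0 : ℝ) < 1 / 3))
    exact this
  rw [Filter.eventually_atTop] at hev ⊢
  obtain ⟨N, hN⟩ := hev
  refine ⟨N, fun n hn => ?_⟩
  have key : ‖q‖ ^ (n + 2) ≤ 1 / 3 := by
    calc ‖q‖ ^ (n + 2) ≤ ‖q‖ ^ n := by
          apply pow_le_pow_of_le_one (norm_nonneg q) hq.le; omega
      _ ≤ 1 / 3 := hN n hn
  have hden : (2 : ℝ) / 3 ≤ ‖1 - (-q) * q ^ (n + 1)‖ := by
    have h1 : ‖(-q) * q ^ (n + 1)‖ ≤ 1 / 3 := by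
      rw [norm_mul, norm_neg, norm_pow, ← pow_succ']
      exact key
    calc (2 : ℝ) / 3 = 1 - 1 / 3 := by norm_num
      _ ≤ 1 - ‖(-q) * q ^ (n + 1)‖ := by linarith
      _ ≤ ‖1 - (-q) * q ^ (n + 1)‖ := by
          have := norm_sub_norm_le (1 : ℂ) ((-q) * q ^ (n + 1))
          simpa using this
  have h2 : (1 - (-q) * q ^ (n + 1)) ≠ 0 := factor_ne_zero hq _
  rw [Aterm_succ hq n, norm_mul, norm_div, norm_neg, norm_pow]
  rw [mul_comm ((1 : ℝ) / 2)]
  apply mul_le_mul_of_nonneg_left _ (norm_nonneg _)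
  rw [div_le_iff₀ (lt_of_lt_of_le (by norm_num) hden)]
  calc ‖q‖ ^ (n + 2) ≤ 1 / 3 := key
    _ ≤ 1 / 2 * (2 / 3) := by norm_num
    _ ≤ 1 / 2 * ‖1 - (-q) * q ^ (n + 1)‖ := by linarith

lemma pair_eq {q : ℂ} (hq : ‖q‖ < 1) (k : ℕ) :
    Aterm q (2 * k) + Aterm q (2 * k + 1)
      = -(q ^ (2 * (k + 1) ^ 2 - (k + 1)) / qPoch (-q) q (2 * (k + 1))) := by
  have e1 : (2 * k + 1) * (2 * k + 2) / 2 = (2 * k + 1) * (k + 1) := by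
    have : (2 * k + 1) * (2 * k + 2) = (2 * k + 1) * (k + 1) * 2 := by ring
    rw [this, Nat.mul_div_cancel _ (by norm_num : 0 < 2)]
  have e2 : (2 * k + 2) * (2 * k + 3) / 2 = (k + 1) * (2 * k + 3) := by
    have : (2 * k + 2) * (2 * k + 3) = (k + 1) * (2 * k + 3) * 2 := by ring
    rw [this, Nat.mul_div_cancel _ (by norm_num : 0 < 2)]
  have e3 : 2 * (k + 1) ^ 2 - (k + 1) = (2 * k + 1) * (k + 1) := by
    have : 2 * (k + 1) ^ 2 = (2 * k + 1) * (k + 1) + (k + 1) := by ring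
    omega
  have hP : qPoch (-q) q (2 * k + 2)
      = qPoch (-q) q (2 * k + 1) * (1 - (-q) * q ^ (2 * k + 1)) := by
    have h := qPoch_succ (-q) q (2 * k + 1)
    rwa [show 2 * k + 1 + 1 = 2 * k + 2 from rfl] at h
  have h1 : qPoch (-q) q (2 * k + 1) ≠ 0 := qPoch_ne_zero hq _
  have h2 : (1 - (-q) * q ^ (2 * k + 1)) ≠ 0 := factor_ne_zero hq _
  unfold Aterm
  rw [show 2 * (k + 1) = 2 * k + 2 by ring, show 2 * k + 1 + 1 = 2 * k + 2 from rfl,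
    show 2 * k + 1 + 2 = 2 * k + 3 from rfl, e1, e2, e3, hP]
  have hpow1 : (-1 : ℂ) ^ (2 * k + 1) = -1 := by
    rw [pow_succ, pow_mul]; norm_num
  have hpow2 : (-1 : ℂ) ^ (2 * k + 2) = 1 := by
    rw [pow_add, pow_mul]; norm_num
  rw [hpow1, hpow2]
  have hq1 : (k + 1) * (2 * k + 3) = (2 * k + 1) * (k + 1) + (2 * k + 2) := by ring
  rw [hq1, pow_add]
  rw [div_add_div _ _ h1 (mul_ne_zero h1 h2), ← neg_div,
    div_eq_div_iff (mul_ne_zero h1 (mul_ne_zero h1 h2)) (mul_ne_zero h1 h2)]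
  ring

/-- For |q|<1, `∑_{n≥1} q^{2n²-n}/(-q;q)_{2n} = -∑_{n≥1} (-1)^n q^{n(n+1)/2}/(-q;q)_n`. -/
theorem stmt_2 (q : ℂ) (hq : ‖q‖ < 1) :
    ∑' n : ℕ, q ^ (2 * (n + 1) ^ 2 - (n + 1)) / qPoch (-q) q (2 * (n + 1))
      = -∑' n : ℕ, (-1 : ℂ) ^ (n + 1) * q ^ ((n + 1) * (n + 2) / 2) / qPoch (-q) q (n + 1) := by
  have hA : Summable (Aterm q) := summable_Aterm hq
  have he : Summable fun k => Aterm q (2 * k) :=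
    hA.comp_injective (fun a b h => by omega)
  have ho : Summable fun k => Aterm q (2 * k + 1) :=
    hA.comp_injective (fun a b h => by omega)
  have hsplit := tsum_even_add_odd he ho
  have hrhs : (∑' n : ℕ, (-1 : ℂ) ^ (n + 1) * q ^ ((n + 1) * (n + 2) / 2)
      / qPoch (-q) q (n + 1)) = ∑' n, Aterm q n := rfl
  rw [hrhs, ← hsplit, ← Summable.tsum_add he ho]
  rw [← tsum_neg]
  exact tsum_congr fun k => by rw [pair_eq hq k, neg_neg]
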